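/- Let L̄ be a finite-dimensional Lie algebra over a field k, and let J ∈ Λ³(L̄, ad) be the 3-form induced (via χ) by the Jacobiator of any bracket algebra lift (B,[·,·]) over R_{k+1} of a Lie algebra L over R_k with reduction L̄. Then J is a cocycle in the Chevalley–Eilenberg complex of L̄ with coefficients in the adjoint representation: dJ = 0. -/

import Mathlib

open Pointwise

/-- `Rmod R π m` is the quotient ring `R/π^m R`. -/
abbrev Rmod (R : Type) [CommRing R] (π : R) (m : ℕ) : Type :=
  R ⧸ Ideal.span {π ^ m}

section Setup

variable (R : Type) [CommRing R] (π : R) (k : ℕ)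
variable (B : Type) [AddCommGroup B] [Module (Rmod R π (k + 1)) B]

/-- The image of `π` in `R_{k+1}`. -/
noncomputable abbrev pbar : Rmod R π (k + 1) := Ideal.Quotient.mk _ π

/-- The submodule `π^k B` of `B`. -/
noncomputable abbrev pikB : Submodule (Rmod R π (k + 1)) B :=
  (pbar R π k) ^ k • (⊤ : Submodule (Rmod R π (k + 1)) B)

/-- The submodule `π B` of `B`. -/
noncomputable abbrev piB : Submodule (Rmod R π (k + 1)) B :=
  (pbar R π k) • (⊤ : Submodule (Rmod R π (k + 1)) B)

/-- `L = B/π^k B`, the reduction of `B` to a module over `R_k`. -/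
noncomputable abbrev Lred := B ⧸ pikB R π k B

/-- `L̄ = B/πB`, the reduction of `B` to a vector space over the residue field. -/
noncomputable abbrev Lbar := B ⧸ piB R π k B

/-- The reduction map `mod : B → L = B/π^k B`. -/
noncomputable abbrev modk : B →ₗ[Rmod R π (k + 1)] Lred R π k B :=
  (pikB R π k B).mkQ

/-- The reduction map `λ : B → L̄ = B/πB`. -/
noncomputable abbrev lam : B →ₗ[Rmod R π (k + 1)] Lbar R π k B :=
  (piB R π k B).mkQ

/-- `ψ : L̄ → B`, the map sending `x mod πB` to `π^k x`; its (corestriction to `π^k B`)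
is the inverse of the canonical isomorphism `χ : π^k B → L̄`. -/
noncomputable def psi : Lbar R π k B →ₗ[Rmod R π (k + 1)] B :=
  Submodule.liftQ _ ((pbar R π k) ^ k • (LinearMap.id : B →ₗ[Rmod R π (k + 1)] B))
    (by
      intro x hx
      rw [← SetLike.mem_coe, Submodule.coe_pointwise_smul, Set.mem_smul_set] at hx
      obtain ⟨y, -, rfl⟩ := hx
      have h0 : (pbar R π k) ^ k * pbar R π k = 0 := by
        rw [← pow_succ, ← map_pow, Ideal.Quotient.eq_zero_iff_mem]
        exact Ideal.mem_span_singleton_self _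
      simp only [LinearMap.mem_ker, LinearMap.smul_apply, LinearMap.id_apply, smul_smul]
      rw [h0, zero_smul])

@[simp] theorem psi_apply (x : B) :
    psi R π k B (lam R π k B x) = ((pbar R π k) ^ k) • x := rfl

end Setup

/-!
Write `[·,·]` for the bracket of `B`. The Jacobiator `Jac` of any alternating bilinear bracket
satisfies `d Jac = 0` identically, where `d` is the Chevalley–Eilenberg differential built from
that same bracket: after expanding by skew-symmetry the terms cancel in pairs, with no use of the
Jacobi identity. Since `ψ : L̄ → B`, `x ↦ π^k x`, is injective on a free
`R_{k+1}`-module (`π^k x = 0` forces every coordinate of `x` into `π R_{k+1}`) and intertwines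
`ψ (J x̄ ȳ z̄) = Jac x y z` and `ψ [x̄, q] = [x, ψ q]`, the identity `d J = 0` on `L̄` is carried
by `ψ` to `d Jac = 0` on `B`.
-/

open Submodule

section Bracket

variable {A M : Type*} [CommRing A] [AddCommGroup M] [Module A M]

def jacobiator (f : M →ₗ[A] M →ₗ[A] M) (x y z : M) : M :=
  f (f x y) z + f (f y z) x + f (f z x) y

/-- `(dJ)(x, y, z, w)` for the Chevalley–Eilenberg differential with adjoint coefficients. -/
def ceDiff3 (f : M →ₗ[A] M →ₗ[A] M) (J : M → M → M → M) (x y z w : M) : M :=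
  f x (J y z w) - f y (J x z w) + f z (J x y w) - f w (J x y z)
    - J (f x y) z w + J (f x z) y w - J (f x w) y z
    - J (f y z) x w + J (f y w) x z - J (f z w) x y

theorem ceDiff3_jacobiator (f : M →ₗ[A] M →ₗ[A] M) (hf : f.IsAlt) (x y z w : M) :
    ceDiff3 f (jacobiator f) x y z w = 0 := by
  have sk (a b : M) : f a b = -f b a := (hf.neg b a).symm
  simp only [ceDiff3]
  -- reorient brackets until every monomial occurs in one normal form, where `abel` cancels them
  rw [sk x (jacobiator f y z w), sk y (jacobiator f x z w), sk z (jacobiator f x y w),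
    sk w (jacobiator f x y z)]
  simp only [jacobiator, map_add, LinearMap.add_apply]
  rw [sk w x, sk w y, sk z x]
  simp only [map_neg, LinearMap.neg_apply]
  rw [sk w (f x y), sk w (f x z), sk z (f x w), sk w (f y z), sk z (f y w), sk y (f z w)]
  simp only [map_neg, LinearMap.neg_apply]
  rw [sk (f z w) (f x y), sk (f y w) (f x z), sk (f y z) (f x w)]
  abel

end Bracket

theorem Module.Free.mem_smul_top_of_smul_eq_zero {A M : Type*} [CommRing A] [AddCommGroup M]
    [Module A M] [Module.Free A M] {a b : A} (hab : ∀ c, b * c = 0 → a ∣ c) {x : M}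
    (hx : b • x = 0) : x ∈ a • (⊤ : Submodule A M) := by
  let e := Module.Free.chooseBasis A M
  rw [← e.linearCombination_repr x, Finsupp.linearCombination_apply]
  refine Submodule.finsuppSum_mem _ _ _ _ fun i _ => ?_
  obtain ⟨d, hd⟩ := hab (e.repr x i) (by simpa using congrArg (e.repr · i) hx)
  rw [hd, mul_smul]
  exact smul_mem_pointwise_smul _ _ _ trivial

theorem Rmod.dvd_of_pow_mul_eq_zero {R : Type} [CommRing R] [IsDomain R] {π : R} (hπ : π ≠ 0)
    (k : ℕ) {c : Rmod R π (k + 1)} (h : pbar R π k ^ k * c = 0) : pbar R π k ∣ c := by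
  obtain ⟨r, rfl⟩ := Ideal.Quotient.mk_surjective c
  rw [← map_pow, ← map_mul, Ideal.Quotient.eq_zero_iff_mem, Ideal.mem_span_singleton] at h
  obtain ⟨s, hs⟩ := h
  refine ⟨Ideal.Quotient.mk _ s, ?_⟩
  rw [← map_mul]
  congr 1
  apply mul_left_cancel₀ (pow_ne_zero k hπ)
  rw [hs]
  ring

section Reduction

variable {R : Type} [CommRing R] {π : R} {k : ℕ}
  {B : Type} [AddCommGroup B] [Module (Rmod R π (k + 1)) B]

theorem psi_injective [IsDomain R] [Module.Free (Rmod R π (k + 1)) B] (hπ : π ≠ 0) :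
    Function.Injective (psi R π k B) := by
  rw [← LinearMap.ker_eq_bot, LinearMap.ker_eq_bot']
  intro q hq
  obtain ⟨x, rfl⟩ := mkQ_surjective _ q
  exact (Quotient.mk_eq_zero _).2 <|
    Module.Free.mem_smul_top_of_smul_eq_zero (fun _ => Rmod.dvd_of_pow_mul_eq_zero hπ k) hq

variable {br : B →ₗ[Rmod R π (k + 1)] B →ₗ[Rmod R π (k + 1)] B}
  {brb : Lbar R π k B →ₗ[Rmod R π (k + 1)] Lbar R π k B →ₗ[Rmod R π (k + 1)] Lbar R π k B}

theorem psi_bracket (hbrb : ∀ x y : B, lam R π k B (br x y) = brb (lam R π k B x) (lam R π k B y))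
    (x : B) (q : Lbar R π k B) : psi R π k B (brb (lam R π k B x) q) = br x (psi R π k B q) := by
  obtain ⟨u, rfl⟩ := mkQ_surjective _ q
  rw [← lam, ← hbrb, psi_apply, psi_apply, map_smul]

theorem psi_ceDiff3
    (hbrb : ∀ x y : B, lam R π k B (br x y) = brb (lam R π k B x) (lam R π k B y))
    {J : Lbar R π k B →ₗ[Rmod R π (k + 1)] Lbar R π k B →ₗ[Rmod R π (k + 1)]
      Lbar R π k B →ₗ[Rmod R π (k + 1)] Lbar R π k B}
    (hJ : ∀ x y z : B, psi R π k B (J (lam R π k B x) (lam R π k B y) (lam R π k B z)) =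
      jacobiator br x y z) (x y z w : B) :
    psi R π k B (ceDiff3 brb (fun a b c => J a b c)
        (lam R π k B x) (lam R π k B y) (lam R π k B z) (lam R π k B w)) =
      ceDiff3 br (jacobiator br) x y z w := by
  simp only [ceDiff3, map_sub, map_add, psi_bracket hbrb, ← hbrb, hJ]

end Reduction

theorem stmt_6_general (R : Type) [CommRing R] [IsDomain R]
    (π : R) (hπ : Irreducible π) (k : ℕ)
    (B : Type) [AddCommGroup B] [Module (Rmod R π (k + 1)) B]
    [Module.Free (Rmod R π (k + 1)) B]
    (br : B →ₗ[Rmod R π (k + 1)] B →ₗ[Rmod R π (k + 1)] B)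
    (halt : ∀ v, br v v = 0)
    (brb : Lbar R π k B →ₗ[Rmod R π (k + 1)] Lbar R π k B →ₗ[Rmod R π (k + 1)] Lbar R π k B)
    (hbrb : ∀ x y : B, lam R π k B (br x y) = brb (lam R π k B x) (lam R π k B y))
    (J : Lbar R π k B →ₗ[Rmod R π (k + 1)] Lbar R π k B →ₗ[Rmod R π (k + 1)]
      Lbar R π k B →ₗ[Rmod R π (k + 1)] Lbar R π k B)
    (hJ : ∀ x y z : B, psi R π k B (J (lam R π k B x) (lam R π k B y) (lam R π k B z)) =
      br (br x y) z + br (br y z) x + br (br z x) y)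
    :
    ∀ x y z w : Lbar R π k B,
      brb x (J y z w) - brb y (J x z w) + brb z (J x y w) - brb w (J x y z)
      - J (brb x y) z w + J (brb x z) y w - J (brb x w) y z
      - J (brb y z) x w + J (brb y w) x z - J (brb z w) x y = 0 := by
  intro x y z w
  obtain ⟨X, rfl⟩ := mkQ_surjective _ x
  obtain ⟨Y, rfl⟩ := mkQ_surjective _ y
  obtain ⟨Z, rfl⟩ := mkQ_surjective _ z
  obtain ⟨W, rfl⟩ := mkQ_surjective _ w
  apply psi_injective hπ.ne_zero
  rw [map_zero]
  exact (psi_ceDiff3 hbrb hJ X Y Z W).trans (ceDiff3_jacobiator br halt X Y Z W)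

/-- The 3-form `J ∈ Λ³(L̄, ad)` induced via `χ` from the Jacobiator of a
bracket algebra lift `(B,[·,·])` of the Lie algebra `L` is a cocycle for the
Chevalley–Eilenberg differential of `L̄` with adjoint coefficients: `dJ = 0`. -/
theorem stmt_6 (R : Type) [CommRing R] [IsDomain R] [IsDiscreteValuationRing R]
    (π : R) (hπ : Irreducible π) (k : ℕ) (hk : 1 ≤ k)
    (B : Type) [AddCommGroup B] [Module (Rmod R π (k + 1)) B]
    [Module.Free (Rmod R π (k + 1)) B] [Module.Finite (Rmod R π (k + 1)) B]
    (br : B →ₗ[Rmod R π (k + 1)] B →ₗ[Rmod R π (k + 1)] B)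
    (halt : ∀ v, br v v = 0)
    (brL : Lred R π k B →ₗ[Rmod R π (k + 1)] Lred R π k B →ₗ[Rmod R π (k + 1)] Lred R π k B)
    (hlift : ∀ x y : B, modk R π k B (br x y) = brL (modk R π k B x) (modk R π k B y))
    (hjacL : ∀ x y z : Lred R π k B, brL (brL x y) z + brL (brL y z) x + brL (brL z x) y = 0)
    (brb : Lbar R π k B →ₗ[Rmod R π (k + 1)] Lbar R π k B →ₗ[Rmod R π (k + 1)] Lbar R π k B)
    (hbrb : ∀ x y : B, lam R π k B (br x y) = brb (lam R π k B x) (lam R π k B y))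
    (J : Lbar R π k B →ₗ[Rmod R π (k + 1)] Lbar R π k B →ₗ[Rmod R π (k + 1)]
      Lbar R π k B →ₗ[Rmod R π (k + 1)] Lbar R π k B)
    (hJ : ∀ x y z : B, psi R π k B (J (lam R π k B x) (lam R π k B y) (lam R π k B z)) =
      br (br x y) z + br (br y z) x + br (br z x) y)
    :
    ∀ x y z w : Lbar R π k B,
      brb x (J y z w) - brb y (J x z w) + brb z (J x y w) - brb w (J x y z)
      - J (brb x y) z w + J (brb x z) y w - J (brb x w) y z
      - J (brb y z) x w + J (brb y w) x z - J (brb z w) x y = 0 :=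
  stmt_6_general R π hπ k B br halt brb hbrb J hJ
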